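/- Let p be a prime. Let R_p be the localization of the polynomial ring 𝔽_p[X] (𝔽_p = ℤ/pℤ) at the multiplicative submonoid generated by X and 1+X, and let Ω_p = (R_p, +) ⋊ ℤ², where (m, k) ∈ ℤ² acts on the additive group of R_p by multiplication by X^m (1+X)^k. Let Λ_p be the group presented by generators a, s, t and relators a^p, s t s⁻¹ t⁻¹, (t a t⁻¹) a (t a t⁻¹)⁻¹ a⁻¹, and (s a s⁻¹)⁻¹ (t a t⁻¹) a. Then the homomorphism Λ_p → Ω_p sending a to (1, (0,0)), t to (0, (1,0)) and s to (0, (0,1)) is well defined and is an isomorphism of groups. -/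

import Mathlib

/-!
The conjugates `a_{m,k} = (tᵐ sᵏ) a (tᵐ sᵏ)⁻¹` of `a` in `Λ_p` satisfy
`a_{m,k+1} = a_{m+1,k} a_{m,k}`; together with `[tat⁻¹, a] = 1` this lets an induction show
that they all commute. The subgroup `N` they generate is therefore abelian, normal and of
exponent `p`, and conjugation by `t` and `s` makes it an `𝔽_p[X]`-module on which `X` acts by
`t` and `1 + X` by `s`. Both act invertibly, so `N` is an `R_p`-module, and `r ↦ r • a`
together with `(m, k) ↦ tᵐ sᵏ` gives a homomorphism `Ω_p → Λ_p` that is a left inverse of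
`Λ_p → Ω_p`. The latter is onto because `R_p` is additively generated by the units
`Xᵐ (1 + X)ᵏ`.
-/

namespace Baumslag

/-- The generators of `Λ_p`: `a`, `s`, `t`. -/
inductive Gen : Type
  | a : Gen
  | s : Gen
  | t : Gen
deriving DecidableEq

open Gen

/-- The relators of Baumslag's group
`Λ_p = ⟨a, s, t | aᵖ, [s,t], [tat⁻¹, a], sas⁻¹ = (tat⁻¹)a⟩`. -/
def LamRel (p : ℕ) : Set (FreeGroup Gen) :=
  { FreeGroup.of a ^ p,
    FreeGroup.of s * FreeGroup.of t * (FreeGroup.of s)⁻¹ * (FreeGroup.of t)⁻¹,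
    (FreeGroup.of t * FreeGroup.of a * (FreeGroup.of t)⁻¹) * FreeGroup.of a *
      (FreeGroup.of t * FreeGroup.of a * (FreeGroup.of t)⁻¹)⁻¹ * (FreeGroup.of a)⁻¹,
    (FreeGroup.of s * FreeGroup.of a * (FreeGroup.of s)⁻¹)⁻¹ *
      (FreeGroup.of t * FreeGroup.of a * (FreeGroup.of t)⁻¹) * FreeGroup.of a }

/-- Baumslag's finitely presented metabelian group `Λ_p`. -/
def Lam (p : ℕ) : Type := PresentedGroup (LamRel p)

instance (p : ℕ) : Group (Lam p) := by unfold Lam; infer_instance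

end Baumslag

namespace Baumslag

/-- The multiplicative submonoid of `𝔽_p[X]` generated by `X` and `1+X`. -/
noncomputable def Msub (p : ℕ) : Submonoid (Polynomial (ZMod p)) :=
  Submonoid.closure {Polynomial.X, 1 + Polynomial.X}

/-- `R_p = 𝔽_p[X, X⁻¹, (1+X)⁻¹]`, the localization of `𝔽_p[X]` at the
multiplicative submonoid generated by `X` and `1+X`. -/
abbrev Rp (p : ℕ) : Type := Localization (Msub p)

/-- `X`, as a unit of `R_p`. -/
noncomputable def uX (p : ℕ) : (Rp p)ˣ :=
  (IsLocalization.map_units (M := Msub p) (Rp p)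
    ⟨Polynomial.X, Submonoid.subset_closure (Set.mem_insert _ _)⟩).unit

/-- `1 + X`, as a unit of `R_p`. -/
noncomputable def uY (p : ℕ) : (Rp p)ˣ :=
  (IsLocalization.map_units (M := Msub p) (Rp p)
    ⟨1 + Polynomial.X, Submonoid.subset_closure (Set.mem_insert_iff.2 (Or.inr rfl))⟩).unit

/-- `(m, k) ↦ Xᵐ (1+X)ᵏ`, as a homomorphism `ℤ² → (R_p)ˣ`. -/
noncomputable def psiOm (p : ℕ) : Multiplicative (ℤ × ℤ) →* (Rp p)ˣ where
  toFun g := uX p ^ (Multiplicative.toAdd g).1 * uY p ^ (Multiplicative.toAdd g).2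
  map_one' := by simp
  map_mul' g h := by
    show uX p ^ ((Multiplicative.toAdd g).1 + (Multiplicative.toAdd h).1) *
        uY p ^ ((Multiplicative.toAdd g).2 + (Multiplicative.toAdd h).2) =
      uX p ^ (Multiplicative.toAdd g).1 * uY p ^ (Multiplicative.toAdd g).2 *
        (uX p ^ (Multiplicative.toAdd h).1 * uY p ^ (Multiplicative.toAdd h).2)
    rw [zpow_add, zpow_add]
    exact mul_mul_mul_comm (uX p ^ (Multiplicative.toAdd g).1)
      (uX p ^ (Multiplicative.toAdd h).1) (uY p ^ (Multiplicative.toAdd g).2)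
      (uY p ^ (Multiplicative.toAdd h).2)

/-- The action of `ℤ²` on the additive group of `R_p`, where `(m, k)` acts by
multiplication by `Xᵐ (1+X)ᵏ`. -/
noncomputable def phiOm (p : ℕ) :
    Multiplicative (ℤ × ℤ) →* MulAut (Multiplicative (Rp p)) where
  toFun g := AddEquiv.toMultiplicative
    ((DistribMulAction.toAddAut (Rp p)ˣ (Rp p)) (psiOm p g))
  map_one' := by ext x; simp
  map_mul' g h := by ext x; simp only [map_mul]; rfl

/-- The group `Ω_p = R_p ⋊ ℤ²`. -/
noncomputable abbrev Omega (p : ℕ) : Type :=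
  SemidirectProduct (Multiplicative (Rp p)) (Multiplicative (ℤ × ℤ)) (phiOm p)

end Baumslag

namespace Baumslag

open Polynomial SemidirectProduct

section Conjugates

variable {G : Type*} [Group G]

structure Relations (a s t : G) : Prop where
  commute_s_t : Commute s t
  commute_conj_t_a : Commute (t * a * t⁻¹) a
  conj_s_a : s * a * s⁻¹ = t * a * t⁻¹ * a

theorem commute_of_commute_mul_mul {u v x y : G} (hvy : Commute v y) (hux : Commute u x)
    (hvx : Commute v x) (h : Commute (u * v) (x * y)) : Commute u y := by
  have huvy : Commute (u * v) y := by simpa using (hux.mul_left hvx).inv_right.mul_right h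
  simpa using huvy.mul_left hvy.inv_left

def conjA (a s t : G) (m k : ℤ) : G := MulAut.conj (t ^ m * s ^ k) a

variable {a s t : G}

@[simp]
theorem conjA_zero_zero : conjA a s t 0 0 = a := by simp [conjA]

theorem conj_t_zpow_conjA (j m k : ℤ) :
    MulAut.conj (t ^ j) (conjA a s t m k) = conjA a s t (m + j) k := by
  rw [conjA, conjA, ← MulAut.mul_apply, ← map_mul, ← mul_assoc, ← zpow_add, add_comm]

theorem conj_s_zpow_conjA (hst : Commute s t) (j m k : ℤ) :
    MulAut.conj (s ^ j) (conjA a s t m k) = conjA a s t m (k + j) := by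
  rw [conjA, conjA, ← MulAut.mul_apply, ← map_mul, ← mul_assoc,
    ((hst.zpow_zpow j m).eq), mul_assoc, ← zpow_add, add_comm]

theorem commute_conjA_shift_t {m k m' k' : ℤ} (j : ℤ)
    (hc : Commute (conjA a s t m k) (conjA a s t m' k')) :
    Commute (conjA a s t (m + j) k) (conjA a s t (m' + j) k') := by
  simpa only [conj_t_zpow_conjA] using hc.map (MulAut.conj (t ^ j))

theorem commute_conjA_shift_s (hst : Commute s t) {m k m' k' : ℤ} (j : ℤ)
    (hc : Commute (conjA a s t m k) (conjA a s t m' k')) :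
    Commute (conjA a s t m (k + j)) (conjA a s t m' (k' + j)) := by
  simpa only [conj_s_zpow_conjA hst] using hc.map (MulAut.conj (s ^ j))

-- In `Ω_p` this is the normal subgroup `R_p`.
def baseSubgroup (a s t : G) : Subgroup G :=
  Subgroup.closure (Set.range fun q : ℤ × ℤ => conjA a s t q.1 q.2)

namespace Relations

theorem conjA_add_one (h : Relations a s t) (m k : ℤ) :
    conjA a s t m (k + 1) = conjA a s t (m + 1) k * conjA a s t m k := by
  have hts : t ^ m * s ^ k * t = t ^ (m + 1) * s ^ k := by
    rw [mul_assoc, ((h.commute_s_t.zpow_left k).eq), ← mul_assoc, zpow_add_one]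
  calc conjA a s t m (k + 1) = t ^ m * s ^ k * (s * a * s⁻¹) * (t ^ m * s ^ k)⁻¹ := by
        simp only [conjA, MulAut.conj_apply, zpow_add_one]; group
    _ = t ^ m * s ^ k * t * a * (t ^ m * s ^ k * t)⁻¹ *
          (t ^ m * s ^ k * a * (t ^ m * s ^ k)⁻¹) := by
        rw [h.conj_s_a]; group
    _ = _ := by rw [hts]; rfl

theorem commute_conjA_natCast_zero (h : Relations a s t) (n : ℕ) :
    Commute (conjA a s t n 0) a := by
  suffices ∀ n : ℕ, Commute (conjA a s t n 0) (conjA a s t 0 0) ∧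
      Commute (conjA a s t (n + 1) 0) (conjA a s t 0 0) by simpa using (this n).1
  intro n
  -- Conjugating `[a_{n+1}, a] = 1` by `s` gives `[a_{n+2} a_{n+1}, a_1 a] = 1`; conjugating the
  -- induction hypotheses by `t` supplies the commutations needed to cancel down to `[a_{n+2}, a]`.
  induction n with
  | zero => simpa [conjA] using h.commute_conj_t_a
  | succ e ih =>
    refine ⟨by exact_mod_cast ih.2, ?_⟩
    have hvx := commute_conjA_shift_t 1 ih.1
    have hux := commute_conjA_shift_t 1 ih.2
    have huvxy := commute_conjA_shift_s h.commute_s_t 1 ih.2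
    rw [h.conjA_add_one, h.conjA_add_one, zero_add] at huvxy
    rw [zero_add] at hvx hux
    push_cast
    rw [add_assoc, one_add_one_eq_two] at hux huvxy ⊢
    exact commute_of_commute_mul_mul ih.2 hux hvx huvxy

theorem commute_conjA_zero (h : Relations a s t) (i j : ℤ) :
    Commute (conjA a s t i 0) (conjA a s t j 0) := by
  wlog hji : j ≤ i generalizing i j
  · exact (this j i (by omega)).symm
  obtain ⟨n, rfl⟩ := Int.le.dest hji
  have h0 : Commute (conjA a s t n 0) (conjA a s t 0 0) := by
    simpa using h.commute_conjA_natCast_zero n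
  simpa [add_comm] using commute_conjA_shift_t j h0

theorem conjA_mem_closure_conjA_zero (h : Relations a s t) (m : ℤ) (d : ℕ) :
    conjA a s t m d ∈ Subgroup.closure (Set.range fun i => conjA a s t i 0) := by
  induction d generalizing m with
  | zero => exact Subgroup.subset_closure ⟨m, rfl⟩
  | succ d ih =>
    push_cast
    rw [h.conjA_add_one]
    exact mul_mem (ih (m + 1)) (ih m)

theorem commute_conjA (h : Relations a s t) (m k m' k' : ℤ) :
    Commute (conjA a s t m k) (conjA a s t m' k') := by
  wlog hk : k ≤ k' generalizing m k m' k'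
  · exact (this m' k' m k (by omega)).symm
  obtain ⟨d, rfl⟩ := Int.le.dest hk
  have := Subgroup.isMulCommutative_closure (k := Set.range fun i => conjA a s t i 0)
    (by rintro _ ⟨i, rfl⟩ _ ⟨j, rfl⟩; exact (h.commute_conjA_zero i j).eq)
  have h0 : Commute (conjA a s t m 0) (conjA a s t m' d) :=
    setLike_mul_comm (Subgroup.subset_closure (Set.mem_range_self m))
      (h.conjA_mem_closure_conjA_zero m' d)
  simpa [add_comm] using commute_conjA_shift_s h.commute_s_t k h0

theorem isMulCommutative_baseSubgroup (h : Relations a s t) :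
    IsMulCommutative (baseSubgroup a s t) :=
  Subgroup.isMulCommutative_closure (by
    rintro _ ⟨q, rfl⟩ _ ⟨q', rfl⟩; exact (h.commute_conjA q.1 q.2 q'.1 q'.2).eq)

theorem baseSubgroup_normal (h : Relations a s t)
    (hgen : Subgroup.closure {a, s, t} = ⊤) : (baseSubgroup a s t).Normal := by
  rw [← Subgroup.normalizer_eq_top_iff, eq_top_iff, ← hgen]
  refine le_trans ?_ (Subgroup.normalizer_le_normalizer_closure _)
  have hrange (g : G) (σ : ℤ × ℤ ≃ ℤ × ℤ)
      (hσ : ∀ q, MulAut.conj g (conjA a s t q.1 q.2) = conjA a s t (σ q).1 (σ q).2) :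
      g ∈ Subgroup.normalizer (Set.range fun q : ℤ × ℤ => conjA a s t q.1 q.2) := by
    rw [Subgroup.mem_normalizer_iff_conj_image_eq, ← Set.range_comp]
    have hcomp : (MulAut.conj g ∘ fun q : ℤ × ℤ => conjA a s t q.1 q.2) =
        (fun q : ℤ × ℤ => conjA a s t q.1 q.2) ∘ σ := funext hσ
    rw [hcomp, σ.surjective.range_comp]
  simp only [Subgroup.closure_le, Set.insert_subset_iff, Set.singleton_subset_iff]
  refine ⟨hrange a (Equiv.refl _) fun q => ?_,
    hrange s (Equiv.prodCongr (Equiv.refl _) (Equiv.addRight 1)) fun q => ?_,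
    hrange t (Equiv.prodCongr (Equiv.addRight 1) (Equiv.refl _)) fun q => ?_⟩
  · simpa [MulAut.conj_apply] using (h.commute_conjA 0 0 q.1 q.2).mul_inv_cancel
  · simpa using conj_s_zpow_conjA h.commute_s_t 1 q.1 q.2
  · simpa using conj_t_zpow_conjA 1 q.1 q.2

theorem pow_eq_one_of_mem_baseSubgroup (h : Relations a s t) {n : ℕ} (ha : a ^ n = 1)
    {x : G} (hx : x ∈ baseSubgroup a s t) : x ^ n = 1 := by
  have := h.isMulCommutative_baseSubgroup
  induction hx using Subgroup.closure_induction with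
  | mem _ hx =>
    obtain ⟨q, rfl⟩ := hx
    simp only [conjA, ← map_pow, ha, map_one]
  | one => exact one_pow n
  | mul x y hx hy ihx ihy =>
    rw [(Commute.mul_pow (setLike_mul_comm (s := baseSubgroup a s t) hx hy)), ihx, ihy, one_mul]
  | inv x _ ihx => rw [inv_pow, ihx, inv_one]

open scoped IsMulCommutative in
theorem conj_s_eq_mul_conj_t (h : Relations a s t) [(baseSubgroup a s t).Normal] {x : G}
    (hx : x ∈ baseSubgroup a s t) : s * x * s⁻¹ = x * (t * x * t⁻¹) := by
  have := h.isMulCommutative_baseSubgroup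
  have key : (MulAut.conjNormal s : MulAut (baseSubgroup a s t)).toMonoidHom =
      MonoidHom.id _ * (MulAut.conjNormal t).toMonoidHom := by
    refine MonoidHom.eq_of_eqOn_dense Subgroup.closure_closure_coe_preimage ?_
    rintro x ⟨⟨m, k⟩, hx⟩
    apply Subtype.ext
    change s * (x : G) * s⁻¹ = x * (t * x * t⁻¹)
    simp only [← hx, ← MulAut.conj_apply]
    have hs := conj_s_zpow_conjA (a := a) h.commute_s_t 1 m k
    have ht := conj_t_zpow_conjA (a := a) (s := s) (t := t) 1 m k
    rw [zpow_one] at hs ht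
    rw [hs, h.conjA_add_one, ht]
    exact h.commute_conjA _ _ _ _
  simpa using congrArg (fun f => (f ⟨x, hx⟩ : G)) key

end Relations

def tsHom (hst : Commute s t) : Multiplicative (ℤ × ℤ) →* G where
  toFun g := t ^ g.toAdd.1 * s ^ g.toAdd.2
  map_one' := by simp
  map_mul' g g' := by
    simp only [toAdd_mul, Prod.fst_add, Prod.snd_add, zpow_add]
    exact (hst.zpow_zpow g.toAdd.2 g'.toAdd.1).symm.mul_mul_mul_comm _ _

end Conjugates

section ConjugationAction

open scoped IsMulCommutative

variable {G : Type*} [Group G] (N : Subgroup G) [N.Normal] [IsMulCommutative N] (n : ℕ)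
  [Module (ZMod n) (Additive N)]

def conjEnd : G →* Module.End (ZMod n) (Additive N) where
  toFun g := (MulAut.conjNormal g).toMonoidHom.toAdditive.toZModLinearMap n
  map_one' := by ext; simp
  map_mul' _ _ := by ext; simp [mul_assoc]

theorem conjEnd_apply (g : G) (x : Additive N) :
    ((conjEnd N n g x).toMul : G) = g * x.toMul * g⁻¹ :=
  MulAut.conjNormal_apply g x.toMul

end ConjugationAction

section LocalizedPolynomials

variable {p : ℕ}

theorem coe_uX : (uX p : Rp p) = algebraMap (ZMod p)[X] (Rp p) X := rfl

theorem coe_uY : (uY p : Rp p) = algebraMap (ZMod p)[X] (Rp p) (1 + X) := rfl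

theorem coe_psiOm_ofAdd_one_zero :
    (psiOm p (.ofAdd (1, 0)) : Rp p) = algebraMap (ZMod p)[X] (Rp p) X := by
  simp [psiOm, coe_uX]

theorem coe_psiOm_ofAdd_zero_one :
    (psiOm p (.ofAdd (0, 1)) : Rp p) = algebraMap (ZMod p)[X] (Rp p) (1 + X) := by
  simp [psiOm, coe_uY]

theorem exists_algebraMap_eq_psiOm {d : (ZMod p)[X]} (hd : d ∈ Msub p) :
    ∃ g, algebraMap (ZMod p)[X] (Rp p) d = psiOm p g := by
  induction hd using Submonoid.closure_induction with
  | mem d hd =>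
    rcases hd with rfl | rfl
    · exact ⟨.ofAdd (1, 0), coe_psiOm_ofAdd_one_zero.symm⟩
    · exact ⟨.ofAdd (0, 1), coe_psiOm_ofAdd_zero_one.symm⟩
  | one => exact ⟨1, by simp⟩
  | mul d d' _ _ ihd ihd' =>
    obtain ⟨g, hg⟩ := ihd
    obtain ⟨g', hg'⟩ := ihd'
    exact ⟨g * g', by simp [hg, hg']⟩

namespace Rp

section Lift

variable {T : Type*} [Ring T] [Algebra (ZMod p) T] {x : T}

theorem isUnit_aeval_of_mem (hx : IsUnit x) (hx1 : IsUnit (1 + x)) {d : (ZMod p)[X]}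
    (hd : d ∈ Msub p) : IsUnit (aeval x d) := by
  induction hd using Submonoid.closure_induction with
  | mem d hd => rcases hd with rfl | rfl <;> simpa
  | one => simp
  | mul d d' _ _ ihd ihd' => simpa using ihd.mul ihd'

-- `Localization` is an Ore localization, whose universal property allows a noncommutative target.
noncomputable def lift (hx : IsUnit x) (hx1 : IsUnit (1 + x)) : Rp p →+* T :=
  OreLocalization.universalHom (aeval x).toRingHom
    (IsUnit.liftRight ((aeval x).toMonoidHom.comp (Msub p).subtype)
      fun d => isUnit_aeval_of_mem hx hx1 d.2)
    fun _ => rfl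

theorem lift_algebraMap (hx : IsUnit x) (hx1 : IsUnit (1 + x)) (q : (ZMod p)[X]) :
    lift hx hx1 (algebraMap (ZMod p)[X] (Rp p) q) = aeval x q :=
  OreLocalization.universalHom_commutes _ _ _

theorem units_map_lift_psiOm (hx : IsUnit x) (hx1 : IsUnit (1 + x))
    (g : Multiplicative (ℤ × ℤ)) :
    Units.map (lift (p := p) hx hx1 : Rp p →* T) (psiOm p g) =
      hx.unit ^ g.toAdd.1 * hx1.unit ^ g.toAdd.2 := by
  have hX : Units.map (lift (p := p) hx hx1 : Rp p →* T) (uX p) = hx.unit :=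
    Units.ext (by simp [coe_uX, lift_algebraMap])
  have hY : Units.map (lift (p := p) hx hx1 : Rp p →* T) (uY p) = hx1.unit :=
    Units.ext (by simp [coe_uY, lift_algebraMap])
  simp only [psiOm, MonoidHom.coe_mk, OneHom.coe_mk, map_mul, map_zpow, hX, hY]

end Lift

theorem eq_top_of_one_mem_of_psiOm_mul_mem (B : AddSubgroup (Rp p)) (h1 : (1 : Rp p) ∈ B)
    (hmul : ∀ g, ∀ r ∈ B, (psiOm p g : Rp p) * r ∈ B) : B = ⊤ := by
  have hpoly (q : (ZMod p)[X]) : algebraMap (ZMod p)[X] (Rp p) q ∈ B := by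
    induction q using Polynomial.induction_on with
    | C c =>
      obtain ⟨m, rfl⟩ := ZMod.intCast_surjective c
      simpa using zsmul_mem h1 m
    | add q q' hq hq' => simpa using add_mem hq hq'
    | monomial n c ih =>
      have := hmul (.ofAdd (1, 0)) _ ih
      rwa [coe_psiOm_ofAdd_one_zero, ← map_mul, ← mul_assoc, mul_comm X, mul_assoc,
        ← pow_succ'] at this
  refine eq_top_iff.2 fun r _ => ?_
  obtain ⟨⟨q, d⟩, rfl⟩ := IsLocalization.mk'_surjective (Msub p) r
  obtain ⟨g, hg⟩ := exists_algebraMap_eq_psiOm d.2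
  have hr : IsLocalization.mk' (Rp p) q d = (psiOm p g⁻¹ : Rp p) * algebraMap _ _ q := by
    rw [map_inv, Units.eq_inv_mul_iff_mul_eq, ← hg, mul_comm, IsLocalization.mk'_spec]
  change IsLocalization.mk' (Rp p) q d ∈ B
  rw [hr]
  exact hmul _ _ (hpoly q)

end Rp

end LocalizedPolynomials

section Presentation

variable {p : ℕ} {G : Type*} [Group G]

theorem forall_lamRel_map_eq_one_iff (φ : FreeGroup Gen →* G) :
    (∀ r ∈ LamRel p, φ r = 1) ↔ φ (.of .a) ^ p = 1 ∧
      Relations (φ (.of .a)) (φ (.of .s)) (φ (.of .t)) := by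
  simp only [LamRel, Set.mem_insert_iff, Set.mem_singleton_iff, forall_eq_or_imp, forall_eq,
    map_mul, map_inv, map_pow]
  rw [← commutatorElement_def, ← commutatorElement_def, commutatorElement_eq_one_iff_commute,
    commutatorElement_eq_one_iff_commute, mul_assoc _ _ (φ (.of .a)), inv_mul_eq_one]
  exact ⟨fun ⟨ha, hst, hta, hsa⟩ => ⟨ha, hst, hta, hsa⟩,
    fun ⟨ha, hst, hta, hsa⟩ => ⟨ha, hst, hta, hsa⟩⟩

end Presentation

namespace Lam

variable {p : ℕ}

def A (p : ℕ) : Lam p := PresentedGroup.of .a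

def S (p : ℕ) : Lam p := PresentedGroup.of .s

def T (p : ℕ) : Lam p := PresentedGroup.of .t

theorem pow_and_relations : A p ^ p = 1 ∧ Relations (A p) (S p) (T p) :=
  (forall_lamRel_map_eq_one_iff (PresentedGroup.mk (LamRel p))).1
    fun _ hr => PresentedGroup.one_of_mem hr

theorem closure_A_S_T : Subgroup.closure {A p, S p, T p} = ⊤ := by
  rw [show ({A p, S p, T p} : Set (Lam p)) = Set.range PresentedGroup.of from ?_]
  · exact PresentedGroup.closure_range_of _
  ext x
  constructor
  · rintro (rfl | rfl | rfl) <;> exact ⟨_, rfl⟩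
  · rintro ⟨(_ | _ | _), rfl⟩
    exacts [Or.inl rfl, Or.inr (Or.inl rfl), Or.inr (Or.inr rfl)]

end Lam

namespace Omega

variable {p : ℕ}

theorem inr_mul_inl_mul_inr_inv (g : Multiplicative (ℤ × ℤ)) (r : Rp p) :
    (inr g * inl (.ofAdd r) * (inr g)⁻¹ : Omega p) = inl (.ofAdd (psiOm p g * r)) := by
  rw [← map_inv, ← inl_aut]
  rfl

theorem pow_and_relations :
    (inl (.ofAdd 1) : Omega p) ^ p = 1 ∧
      Relations (inl (.ofAdd 1) : Omega p) (inr (.ofAdd (0, 1))) (inr (.ofAdd (1, 0))) := by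
  refine ⟨?_, (Commute.all _ _).map inr, ?_, ?_⟩
  · rw [← map_pow, ← ofAdd_nsmul, nsmul_one, ← map_natCast (algebraMap (ZMod p)[X] (Rp p)),
      CharP.cast_eq_zero, map_zero, ofAdd_zero, map_one]
  · rw [inr_mul_inl_mul_inr_inv]
    exact (Commute.all _ _).map inl
  · rw [inr_mul_inl_mul_inr_inv, inr_mul_inl_mul_inr_inv, ← map_mul, ← ofAdd_add, mul_one,
      mul_one, coe_psiOm_ofAdd_one_zero, coe_psiOm_ofAdd_zero_one, map_add, map_one, add_comm]

end Omega

noncomputable def genImage (p : ℕ) : Gen → Omega p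
  | .a => inl (.ofAdd 1)
  | .s => inr (.ofAdd (0, 1))
  | .t => inr (.ofAdd (1, 0))

noncomputable def toOmega (p : ℕ) : Lam p →* Omega p :=
  PresentedGroup.toGroup (f := genImage p)
    ((forall_lamRel_map_eq_one_iff _).2 (by simpa [genImage] using Omega.pow_and_relations))

theorem toOmega_of (x : Gen) : toOmega p (PresentedGroup.of x) = genImage p x :=
  PresentedGroup.toGroup.of _

theorem toOmega_surjective : Function.Surjective (toOmega p) := by
  have hinr (g : Multiplicative (ℤ × ℤ)) : inr g ∈ (toOmega p).range := by
    have hg : g = .ofAdd (1, 0) ^ g.toAdd.1 * .ofAdd (0, 1) ^ g.toAdd.2 := by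
      apply Multiplicative.toAdd.injective
      simp
    rw [hg, map_mul, map_zpow, map_zpow]
    exact mul_mem (zpow_mem (MonoidHom.mem_range.2 ⟨Lam.T p, toOmega_of _⟩) _)
      (zpow_mem (MonoidHom.mem_range.2 ⟨Lam.S p, toOmega_of _⟩) _)
  have hinl : (Subgroup.comap inl (toOmega p).range).toAddSubgroup' = ⊤ := by
    refine Rp.eq_top_of_one_mem_of_psiOm_mul_mem _ ⟨Lam.A p, toOmega_of _⟩ fun g r hr => ?_
    rw [Subgroup.mem_toAddSubgroup', Subgroup.mem_comap, ← Omega.inr_mul_inl_mul_inr_inv]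
    exact mul_mem (mul_mem (hinr g) hr) (inv_mem (hinr g))
  intro w
  rw [← MonoidHom.mem_range, ← inl_left_mul_inr_right w]
  refine mul_mem ?_ (hinr _)
  have : w.left.toAdd ∈ (Subgroup.comap inl (toOmega p).range).toAddSubgroup' :=
    hinl ▸ AddSubgroup.mem_top _
  simpa using this

namespace Lam

open scoped IsMulCommutative

abbrev base (p : ℕ) : Subgroup (Lam p) := baseSubgroup (A p) (S p) (T p)

instance : IsMulCommutative (base p) := pow_and_relations.2.isMulCommutative_baseSubgroup

instance : (base p).Normal := pow_and_relations.2.baseSubgroup_normal closure_A_S_T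

noncomputable instance : Module (ZMod p) (Additive (base p)) :=
  AddCommGroup.zmodModule fun x => Additive.toMul.injective <| Subtype.ext <|
    pow_and_relations.2.pow_eq_one_of_mem_baseSubgroup pow_and_relations.1 x.toMul.2

theorem conjEnd_S : conjEnd (base p) p (S p) = 1 + conjEnd (base p) p (T p) :=
  LinearMap.ext fun x => Additive.toMul.injective <| Subtype.ext <| by
    simpa [conjEnd_apply] using pow_and_relations.2.conj_s_eq_mul_conj_t x.toMul.2

theorem isUnit_conjEnd (g : Lam p) : IsUnit (conjEnd (base p) p g) := (Group.isUnit g).map _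

theorem isUnit_one_add_conjEnd_T : IsUnit (1 + conjEnd (base p) p (T p)) :=
  conjEnd_S ▸ isUnit_conjEnd (S p)

noncomputable def baseAction (p : ℕ) : Rp p →+* Module.End (ZMod p) (Additive (base p)) :=
  Rp.lift (isUnit_conjEnd (T p)) isUnit_one_add_conjEnd_T

theorem baseAction_psiOm (g : Multiplicative (ℤ × ℤ)) :
    baseAction p (psiOm p g) = conjEnd (base p) p (tsHom pow_and_relations.2.commute_s_t g) := by
  have hT : (isUnit_conjEnd (T p)).unit = (conjEnd (base p) p).toHomUnits (T p) := Units.ext rfl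
  have hS : (isUnit_one_add_conjEnd_T (p := p)).unit = (conjEnd (base p) p).toHomUnits (S p) :=
    Units.ext conjEnd_S.symm
  have h := congrArg Units.val
    (Rp.units_map_lift_psiOm (p := p) (isUnit_conjEnd (T p)) isUnit_one_add_conjEnd_T g)
  rw [hT, hS, ← map_zpow, ← map_zpow, ← map_mul] at h
  exact h

def baseA (p : ℕ) : Additive (base p) :=
  .ofMul ⟨A p, Subgroup.subset_closure ⟨(0, 0), conjA_zero_zero⟩⟩

noncomputable def smulAHom (p : ℕ) : Multiplicative (Rp p) →* Lam p :=
  (base p).subtype.comp <| AddMonoidHom.toMultiplicativeLeft <|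
    AddMonoidHom.mk' (fun r => baseAction p r (baseA p)) fun r r' => by simp [LinearMap.add_apply]

theorem smulAHom_apply (r : Multiplicative (Rp p)) :
    smulAHom p r = ((baseAction p r.toAdd (baseA p)).toMul : Lam p) := rfl

noncomputable def ofOmega (p : ℕ) : Omega p →* Lam p :=
  SemidirectProduct.lift (smulAHom p) (tsHom pow_and_relations.2.commute_s_t) fun g =>
    MonoidHom.ext fun r => by
      change ((baseAction p (psiOm p g * r.toAdd) (baseA p)).toMul : Lam p) =
        _ * smulAHom p r * _⁻¹
      rw [map_mul, Module.End.mul_apply, baseAction_psiOm, conjEnd_apply, smulAHom_apply]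

theorem ofOmega_comp_toOmega : (ofOmega p).comp (toOmega p) = MonoidHom.id (Lam p) := by
  refine PresentedGroup.ext fun x => ?_
  change ofOmega p (toOmega p (PresentedGroup.of x)) = PresentedGroup.of x
  rw [toOmega_of]
  cases x
  · rw [genImage, ofOmega, lift_inl, smulAHom_apply, toAdd_ofAdd, map_one]
    rfl
  · rw [genImage, ofOmega, lift_inr]
    change T p ^ (0 : ℤ) * S p ^ (1 : ℤ) = S p
    rw [zpow_zero, zpow_one, one_mul]
  · rw [genImage, ofOmega, lift_inr]
    change T p ^ (1 : ℤ) * S p ^ (0 : ℤ) = T p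
    rw [zpow_zero, zpow_one, mul_one]

end Lam

end Baumslag

open Baumslag Baumslag.Gen

theorem stmt15_general (p : ℕ) :
    ∃ f : Lam p →* Omega p,
      f (PresentedGroup.of a) =
        SemidirectProduct.inl (Multiplicative.ofAdd (1 : Rp p)) ∧
      f (PresentedGroup.of t) =
        SemidirectProduct.inr (Multiplicative.ofAdd ((1 : ℤ), (0 : ℤ))) ∧
      f (PresentedGroup.of s) =
        SemidirectProduct.inr (Multiplicative.ofAdd ((0 : ℤ), (1 : ℤ))) ∧
      Function.Bijective f :=
  ⟨toOmega p, toOmega_of _, toOmega_of _, toOmega_of _,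
    (Function.LeftInverse.injective (g := Lam.ofOmega p)
      (DFunLike.congr_fun Lam.ofOmega_comp_toOmega)), toOmega_surjective⟩

/-- Baumslag: the homomorphism `Λ_p → Ω_p` sending
`a ↦ (1, (0,0))`, `t ↦ (0, (1,0))`, `s ↦ (0, (0,1))` is well defined and is an
isomorphism. -/
theorem stmt15 (p : ℕ) (hp : p.Prime) :
    ∃ f : Lam p →* Omega p,
      f (PresentedGroup.of a) =
        SemidirectProduct.inl (Multiplicative.ofAdd (1 : Rp p)) ∧
      f (PresentedGroup.of t) =
        SemidirectProduct.inr (Multiplicative.ofAdd ((1 : ℤ), (0 : ℤ))) ∧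
      f (PresentedGroup.of s) =
        SemidirectProduct.inr (Multiplicative.ofAdd ((0 : ℤ), (1 : ℤ))) ∧
      Function.Bijective f :=
  stmt15_general p
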